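/- Let G be a group and A₀ ⊇ A₁ ⊇ A₂ ⊇ ⋯ a descending chain of subgroups, regarded as an inverse sequence (⋯ ↪ A₁ ↪ A₀) with the inclusions as bonding maps. Then there is a bijection between the derived limit lim¹ Aᵢ and the orbit set A₀ \ lim(A₀/Aᵢ) of the action of A₀ by left translations on the inverse limit of the coset spaces A₀/Aᵢ (with the natural projections A₀/Aᵢ₊₁ → A₀/Aᵢ as bonding maps); the bijection sends the class of (g₀,g₁,g₂,…) ∈ ∏ᵢ Aᵢ to the orbit of the thread (g₀A₁, g₀g₁A₂, g₀g₁g₂A₃, …). -/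

import Mathlib

namespace Lim1Chain

variable {G : Type} [Group G]

/-- In a descending chain of subgroups, every `A i` is contained in `A 0`. -/
theorem chainLe (A : ℕ → Subgroup G) (hA : ∀ i, A (i + 1) ≤ A i) :
    ∀ i, A i ≤ A 0
  | 0 => le_rfl
  | i + 1 => (hA i).trans (chainLe A hA i)

/-- The orbit relation on `∏ᵢ Aᵢ` whose orbit set is the derived limit `lim¹ Aᵢ` of
the chain `⋯ ↪ A₁ ↪ A₀` (the bonding maps being the inclusions):
`(g₀,g₁,…)·(x₀,x₁,…) = (x₀⁻¹g₀x₁, x₁⁻¹g₁x₂, …)`. -/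
def chainRel (A : ℕ → Subgroup G) (g g' : ∀ i, ↥(A i)) : Prop :=
  ∃ x : ∀ i, ↥(A i), ∀ i,
    (g' i : G) = (x i : G)⁻¹ * (g i : G) * (x (i + 1) : G)

/-- The coset space `A₀/Aᵢ`. -/
abbrev CosetSp (A : ℕ → Subgroup G) (i : ℕ) : Type :=
  ↥(A 0) ⧸ (A i).subgroupOf (A 0)

/-- The natural projection `A₀/Aᵢ₊₁ → A₀/Aᵢ`. -/
def proj (A : ℕ → Subgroup G) (hA : ∀ i, A (i + 1) ≤ A i) (i : ℕ) :
    CosetSp A (i + 1) → CosetSp A i :=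
  Quotient.map' id (fun a b hab => by
    rw [QuotientGroup.leftRel_apply] at hab ⊢
    rw [Subgroup.mem_subgroupOf] at hab ⊢
    exact hA i hab)

/-- The inverse limit `lim A₀/Aᵢ` of the coset spaces. -/
def LimCosets (A : ℕ → Subgroup G) (hA : ∀ i, A (i + 1) ≤ A i) : Type :=
  {c : ∀ i, CosetSp A i // ∀ i, proj A hA i (c (i + 1)) = c i}

/-- The orbit relation of the action of `A₀` on `lim A₀/Aᵢ` by left translations. -/
def orbitRel (A : ℕ → Subgroup G) (hA : ∀ i, A (i + 1) ≤ A i)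
    (c c' : LimCosets A hA) : Prop :=
  ∃ a : ↥(A 0), ∀ i, a • c.1 i = c'.1 i

/-- The partial products `g₀g₁⋯gᵢ₋₁ ∈ A₀` of a sequence `(g₀,g₁,…) ∈ ∏ᵢ Aᵢ`. -/
def partialProd (A : ℕ → Subgroup G) (hA : ∀ i, A (i + 1) ≤ A i)
    (g : ∀ i, ↥(A i)) : ℕ → ↥(A 0)
  | 0 => 1
  | i + 1 => partialProd A hA g i * ⟨(g i : G), chainLe A hA i (g i).2⟩

/-- The thread `(A₀, g₀A₁, g₀g₁A₂, g₀g₁g₂A₃, …) ∈ lim A₀/Aᵢ` associated to a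
sequence `(g₀,g₁,…) ∈ ∏ᵢ Aᵢ`. -/
def threadOf (A : ℕ → Subgroup G) (hA : ∀ i, A (i + 1) ≤ A i)
    (g : ∀ i, ↥(A i)) : LimCosets A hA :=
  ⟨fun i => (Quotient.mk'' (partialProd A hA g i) : CosetSp A i), fun i => by
    refine Quotient.sound' ?_
    rw [QuotientGroup.leftRel_apply, Subgroup.mem_subgroupOf]
    show (((partialProd A hA g (i + 1) : ↥(A 0)))⁻¹ * partialProd A hA g i : G) ∈ A i
    have h : partialProd A hA g (i + 1)
        = partialProd A hA g i * ⟨(g i : G), chainLe A hA i (g i).2⟩ := rfl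
    rw [h]
    push_cast
    rw [mul_inv_rev, mul_assoc, inv_mul_cancel, mul_one]
    exact inv_mem (g i).2⟩

end Lim1Chain

/-!
The class of `(g₀,g₁,…)` is sent to the orbit of the thread of its partial products
`Pᵢ = g₀⋯gᵢ₋₁`. Acting on `(gᵢ)` by `(xᵢ)` replaces `Pᵢ` by `x₀⁻¹Pᵢxᵢ`, which is the same
thread translated by `x₀⁻¹`; conversely, if `a · (PᵢAᵢ) = (P'ᵢAᵢ)` then
`xᵢ = (aPᵢ)⁻¹P'ᵢ ∈ Aᵢ` is a gauge from `g` to `g'`. Every thread `(pᵢAᵢ)` comes from the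
telescoping sequence `gᵢ = pᵢ⁻¹pᵢ₊₁`, up to translation by `p₀`.
-/

namespace Lim1Chain

variable {G : Type} [Group G] {A : ℕ → Subgroup G} {hA : ∀ i, A (i + 1) ≤ A i}

@[simp]
theorem coe_partialProd_zero (g : ∀ i, ↥(A i)) : (partialProd A hA g 0 : G) = 1 := rfl

theorem coe_partialProd_succ (g : ∀ i, ↥(A i)) (i : ℕ) :
    (partialProd A hA g (i + 1) : G) = partialProd A hA g i * g i := rfl

theorem threadOf_apply (g : ∀ i, ↥(A i)) (i : ℕ) :
    (threadOf A hA g).1 i = (QuotientGroup.mk (partialProd A hA g i) : CosetSp A i) := rfl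

theorem proj_mk (i : ℕ) (a : ↥(A 0)) :
    proj A hA i (QuotientGroup.mk a) = (QuotientGroup.mk a : CosetSp A i) := rfl

theorem smul_mk {i : ℕ} (a b : ↥(A 0)) :
    a • (QuotientGroup.mk b : CosetSp A i) = QuotientGroup.mk (a * b) := rfl

theorem mk_eq_mk_iff {i : ℕ} {a b : ↥(A 0)} :
    (QuotientGroup.mk a : CosetSp A i) = QuotientGroup.mk b ↔ (a : G)⁻¹ * b ∈ A i := by
  rw [QuotientGroup.eq, Subgroup.mem_subgroupOf]
  rfl

theorem orbitRel_equivalence : Equivalence (orbitRel A hA) where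
  refl _ := ⟨1, fun _ => one_smul _ _⟩
  symm := fun ⟨a, h⟩ => ⟨a⁻¹, fun i => by rw [← h i, inv_smul_smul]⟩
  trans := fun ⟨a, h⟩ ⟨b, h'⟩ => ⟨b * a, fun i => by rw [mul_smul, h i, h' i]⟩

theorem gauge_iff_partialProd (g g' x : ∀ i, ↥(A i)) :
    (∀ i, (g' i : G) = (x i : G)⁻¹ * g i * x (i + 1)) ↔
      ∀ i, (partialProd A hA g' i : G) = (x 0 : G)⁻¹ * partialProd A hA g i * x i := by
  constructor
  · intro h i
    induction i with
    | zero => simp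
    | succ i ih => rw [coe_partialProd_succ, coe_partialProd_succ, ih, h i]; group
  · intro h i
    have hsucc := h (i + 1)
    rw [coe_partialProd_succ, coe_partialProd_succ, h i] at hsucc
    calc (g' i : G)
        = ((x 0 : G)⁻¹ * partialProd A hA g i * x i)⁻¹
            * ((x 0 : G)⁻¹ * partialProd A hA g i * x i * g' i) := by group
      _ = (x i : G)⁻¹ * g i * x (i + 1) := by rw [hsucc]; group

theorem chainRel_iff_orbitRel_threadOf (g g' : ∀ i, ↥(A i)) :
    chainRel A g g' ↔ orbitRel A hA (threadOf A hA g) (threadOf A hA g') := by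
  simp only [chainRel, orbitRel, threadOf_apply, smul_mk, mk_eq_mk_iff]
  constructor
  · rintro ⟨x, hx⟩
    rw [gauge_iff_partialProd (hA := hA)] at hx
    refine ⟨(x 0)⁻¹, fun i => ?_⟩
    convert (x i).2 using 1
    push_cast
    rw [hx i]
    group
  · rintro ⟨a, ha⟩
    refine ⟨fun i => ⟨_, ha i⟩, (gauge_iff_partialProd (hA := hA) _ _ _).2 fun i => ?_⟩
    push_cast
    simp only [coe_partialProd_zero, mul_one]
    group

theorem exists_orbitRel_threadOf (c : LimCosets A hA) :
    ∃ g, orbitRel A hA (threadOf A hA g) c := by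
  obtain ⟨p, hp⟩ : ∃ p : ℕ → ↥(A 0), ∀ i, (QuotientGroup.mk (p i) : CosetSp A i) = c.1 i :=
    ⟨fun i => (c.1 i).out, fun i => QuotientGroup.out_eq' _⟩
  have hstep : ∀ i, (p i : G)⁻¹ * p (i + 1) ∈ A i := fun i => by
    have hc := c.2 i
    rw [← hp, ← hp, proj_mk] at hc
    exact mk_eq_mk_iff.1 hc.symm
  let g : ∀ i, ↥(A i) := fun i => ⟨_, hstep i⟩
  have hpp : ∀ i, (partialProd A hA g i : G) = (p 0 : G)⁻¹ * p i := fun i => by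
    induction i with
    | zero => simp
    | succ i ih => rw [coe_partialProd_succ, ih]; simp [g, mul_assoc]
  refine ⟨g, p 0, fun i => ?_⟩
  rw [threadOf_apply, smul_mk, ← hp i, mk_eq_mk_iff]
  push_cast
  rw [hpp]
  simp

end Lim1Chain

open Lim1Chain in
theorem lim1_chain_equiv_orbit_set {G : Type} [Group G]
    (A : ℕ → Subgroup G) (hA : ∀ i, A (i + 1) ≤ A i) :
    ∃ F : Quot (chainRel A) → Quot (orbitRel A hA),
      Function.Bijective F ∧
      ∀ g : ∀ i, ↥(A i),
        F (Quot.mk (chainRel A) g) = Quot.mk (orbitRel A hA) (threadOf A hA g) := by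
  refine ⟨Quot.lift (fun g => Quot.mk _ (threadOf A hA g))
      (fun g g' h => Quot.sound ((chainRel_iff_orbitRel_threadOf g g').1 h)),
    ⟨?_, ?_⟩, fun g => rfl⟩
  · rintro ⟨g⟩ ⟨g'⟩ h
    have hrel := orbitRel_equivalence.eqvGen_iff.1 (Quot.eqvGen_exact h)
    exact Quot.sound ((chainRel_iff_orbitRel_threadOf g g').2 hrel)
  · rintro ⟨c⟩
    obtain ⟨g, hg⟩ := exists_orbitRel_threadOf c
    exact ⟨Quot.mk _ g, Quot.sound hg⟩
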